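/- arXiv:2511.05288 — 3 statements merged into one kernel-verified Lean document; each statement's English description precedes it below -/
import Mathlib

section
/- Let R = k[x_1,...,x_m] over a field k and let g_1,...,g_m be a homogeneous regular sequence generating an Artinian ideal I. If N is an m×m matrix over R with (g_1,...,g_m)^T = N·(x_1,...,x_m)^T, then the class of det N in R/I is nonzero. -/
/-!
Write `g = N v`. Let `E` be the exterior algebra of `Rᵐ`, let `δ` be contraction from the right
with the linear form `x ↦ ∑ xⱼ vⱼ`, and let `F_q ∈ E` be the wedge product of the first `q` rows of `N`, so that
`δ (N i) = g i`. As `F_m = det N • e₀ ∧ ⋯ ∧ e_{m-1}`, the hypothesis `det N ∈ (g)` says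
`F_m ∈ im δ + (g₀, …, g_{m-1}) E`. If `F_{q+1} = F_q ∧ N_q = δ P + g_q c + y` with
`y ∈ (g₀, …, g_{q-1}) E`, applying `δ` and using `δ² = 0` gives
`g_q (F_q - δ c) ∈ (g₀, …, g_{q-1}) E`, and since `g_q` is regular modulo its predecessors on the
free module `E`, `F_q ∈ im δ + (g₀, …, g_{q-1}) E`. At `q = 0` this gives `1 ∈ im δ`; but the
scalar part of an element of `im δ` lies in `(v)`, which for `v = x` is a proper ideal.
-/

open RingTheory.Sequence Matrix

theorem AlternatingMap.map_eq_basis_det_smul {R M N ι : Type*} [CommRing R] [AddCommGroup M]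
    [Module R M] [AddCommGroup N] [Module R N] [Fintype ι] [DecidableEq ι]
    (e : Module.Basis ι R M) (f : M [⋀^ι]→ₗ[R] N) (v : ι → M) : f v = e.det v • f e := by
  suffices f = e.det.smulRight (f e) from DFunLike.congr_fun this v
  refine e.ext_alternating fun i hi => ?_
  let σ : Equiv.Perm ι := Equiv.ofBijective i (Finite.injective_iff_bijective.1 hi)
  change f (e ∘ σ) = e.det.smulRight (f e) (e ∘ σ)
  simp [AlternatingMap.map_perm, Module.Basis.det_self]

theorem RingTheory.Sequence.IsWeaklyRegular.of_flat_module {R M : Type*} [CommRing R]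
    [AddCommGroup M] [Module R M] [Module.Flat R M] {rs : List R} (h : IsWeaklyRegular R rs) :
    IsWeaklyRegular M rs :=
  (TensorProduct.rid R M).isWeaklyRegular_congr rs |>.mp h.isWeaklyRegular_lTensor

theorem Ideal.ofList_ofFn {R : Type*} [Semiring R] {n : ℕ} (f : Fin n → R) :
    Ideal.ofList (List.ofFn f) = Ideal.span (Set.range f) :=
  congrArg Ideal.span (Set.ext fun _ => List.mem_ofFn)

theorem MvPolynomial.span_range_X_ne_top {σ R : Type*} [CommSemiring R] [Nontrivial R] :
    Ideal.span (Set.range (X : σ → MvPolynomial σ R)) ≠ ⊤ :=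
  ne_top_of_le_ne_top (RingHom.ker_ne_top constantCoeff)
    (Ideal.span_le.mpr (Set.range_subset_iff.mpr fun i => by simp))

namespace ExteriorAlgebra

variable {R M : Type*} [CommRing R] [AddCommGroup M] [Module R M] (d : Module.Dual R M)

def koszulDifferential : ExteriorAlgebra R M →ₗ[R] ExteriorAlgebra R M :=
  CliffordAlgebra.contractRight.flip d

theorem koszulDifferential_mul_ι (b : ExteriorAlgebra R M) (a : M) :
    koszulDifferential d (b * ι R a) = d a • b - koszulDifferential d b * ι R a :=
  CliffordAlgebra.contractRight_mul_ι d a b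

theorem koszulDifferential_algebraMap (r : R) :
    koszulDifferential d (algebraMap R (ExteriorAlgebra R M) r) = 0 :=
  CliffordAlgebra.contractRight_algebraMap _ d r

theorem koszulDifferential_one : koszulDifferential d (1 : ExteriorAlgebra R M) = 0 :=
  CliffordAlgebra.contractRight_one _ d

theorem koszulDifferential_koszulDifferential (x : ExteriorAlgebra R M) :
    koszulDifferential d (koszulDifferential d x) = 0 :=
  CliffordAlgebra.contractRight_contractRight d x

theorem algebraMapInv_koszulDifferential_mem (x : ExteriorAlgebra R M) :
    algebraMapInv (koszulDifferential d x) ∈ LinearMap.range d := by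
  induction x using CliffordAlgebra.right_induction with
  | algebraMap r => simp [koszulDifferential_algebraMap]
  | add x y hx hy => simpa only [map_add] using add_mem hx hy
  | mul_ι a x _ =>
    have hι : algebraMapInv (ι R a) = 0 := by simp [algebraMapInv]
    rw [koszulDifferential_mul_ι, map_sub, map_smul, map_mul, hι, mul_zero, sub_zero]
    exact ⟨algebraMapInv x • a, by simp [mul_comm]⟩

theorem koszulDifferential_prod_mem (ws : List M) :
    koszulDifferential d (ws.map (ι R)).prod ∈
      Ideal.ofList (ws.map d) • (⊤ : Submodule R (ExteriorAlgebra R M)) := by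
  induction ws using List.reverseRecOn with
  | nil => simp [koszulDifferential_one]
  | append_singleton ws a ih =>
    simp only [List.map_append, List.map_singleton, List.prod_append, List.prod_singleton,
      koszulDifferential_mul_ι, Ideal.ofList_append, Submodule.sup_smul]
    refine sub_mem (Submodule.mem_sup_right ?_) (Submodule.mem_sup_left ?_)
    · exact Submodule.smul_mem_smul (by simp) trivial
    · exact Submodule.smul_top_le_comap_smul_top _ (LinearMap.mulRight R (ι R a)) ih

theorem mem_range_sup_of_mul_ι_mem {J : Ideal R} {a : M} {b : ExteriorAlgebra R M}
    (hb : koszulDifferential d b ∈ J • (⊤ : Submodule R (ExteriorAlgebra R M)))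
    (hreg : IsSMulRegular (ExteriorAlgebra R M ⧸ J • (⊤ : Submodule R (ExteriorAlgebra R M))) (d a))
    (h : b * ι R a ∈ LinearMap.range (koszulDifferential d) ⊔ (J ⊔ Ideal.span {d a}) • ⊤) :
    b ∈ LinearMap.range (koszulDifferential d) ⊔ J • ⊤ := by
  rw [Submodule.sup_smul, Submodule.ideal_span_singleton_smul] at h
  obtain ⟨_, ⟨P, rfl⟩, _, hqc, hsum⟩ := Submodule.mem_sup.mp h
  obtain ⟨q, hq, _, hc, rfl⟩ := Submodule.mem_sup.mp hqc
  obtain ⟨c, -, rfl⟩ := (Submodule.mem_smul_pointwise_iff_exists _ _ _).mp hc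
  have hδ := congrArg (koszulDifferential d) hsum
  rw [koszulDifferential_mul_ι, map_add, map_add, koszulDifferential_koszulDifferential,
    map_smul] at hδ
  have hreg_mem : d a • (b - koszulDifferential d c) ∈
      J • (⊤ : Submodule R (ExteriorAlgebra R M)) := by
    have e : d a • (b - koszulDifferential d c) =
        koszulDifferential d b * ι R a + koszulDifferential d q := by
      linear_combination (norm := module) -hδ
    rw [e]
    exact add_mem (Submodule.smul_top_le_comap_smul_top _ (LinearMap.mulRight R (ι R a)) hb)
      (Submodule.smul_top_le_comap_smul_top _ (koszulDifferential d) hq)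
  rw [← add_sub_cancel (koszulDifferential d c) b]
  exact add_mem (Submodule.mem_sup_left ⟨c, rfl⟩)
    (Submodule.mem_sup_right (mem_of_isSMulRegular_quotient_of_smul_mem hreg hreg_mem))

theorem one_mem_range_koszulDifferential (ws : List M)
    (hreg : IsWeaklyRegular (ExteriorAlgebra R M) (ws.map d))
    (h : (ws.map (ι R)).prod ∈
      LinearMap.range (koszulDifferential d) ⊔ Ideal.ofList (ws.map d) • ⊤) :
    1 ∈ LinearMap.range (koszulDifferential d) := by
  induction ws using List.reverseRecOn with
  | nil => simpa using h
  | append_singleton ws a ih =>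
    rw [List.map_append, isWeaklyRegular_append_iff, List.map_singleton,
      isWeaklyRegular_singleton_iff] at hreg
    refine ih hreg.1 (mem_range_sup_of_mul_ι_mem d (koszulDifferential_prod_mem d ws) hreg.2 ?_)
    simpa only [List.map_append, List.map_singleton, List.prod_append, List.prod_singleton,
      Ideal.ofList_append, Ideal.ofList_singleton] using h

end ExteriorAlgebra

open ExteriorAlgebra in
theorem Ideal.span_eq_top_of_det_mem_span_mulVec {R : Type*} [CommRing R] {m : ℕ}
    (N : Matrix (Fin m) (Fin m) R) (v : Fin m → R)
    (hreg : IsWeaklyRegular R (List.ofFn (N *ᵥ v)))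
    (hdet : N.det ∈ Ideal.span (Set.range (N *ᵥ v))) :
    Ideal.span (Set.range v) = ⊤ := by
  let d := Fintype.linearCombination R v
  let ws := List.ofFn fun i => (N i : Fin m → R)
  have hrows : ws.map d = List.ofFn (N *ᵥ v) := List.map_ofFn ..
  have : Module.Free R (ExteriorAlgebra R (Fin m → R)) :=
    .of_basis (Pi.basisFun R (Fin m)).ExteriorAlgebra
  have htop : (ws.map (ι R)).prod ∈
      LinearMap.range (koszulDifferential d) ⊔ Ideal.ofList (ws.map d) • ⊤ := by
    refine Submodule.mem_sup_right ?_
    have hprod : (ws.map (ι R)).prod = ιMulti R m fun i => N i := by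
      rw [ιMulti_apply, List.map_ofFn]
      rfl
    rw [hrows, Ideal.ofList_ofFn, hprod,
      AlternatingMap.map_eq_basis_det_smul (Pi.basisFun R (Fin m)), Pi.basisFun_det_apply]
    exact Submodule.smul_mem_smul hdet trivial
  obtain ⟨x, hx⟩ := one_mem_range_koszulDifferential d ws (hrows ▸ hreg.of_flat_module) htop
  rw [Ideal.eq_top_iff_one, ← Ideal.submodule_span_eq, ← Fintype.range_linearCombination]
  simpa only [hx, map_one] using algebraMapInv_koszulDifferential_mem d x

open MvPolynomial

theorem det_class_ne_zero_general {k : Type*} [Field k] {m : ℕ}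
    (g : Fin m → MvPolynomial (Fin m) k)
    (hreg : RingTheory.Sequence.IsRegular (MvPolynomial (Fin m) k) (List.ofFn g))
    (I : Ideal (MvPolynomial (Fin m) k)) (hI : I = Ideal.span (Set.range g))
    (N : Matrix (Fin m) (Fin m) (MvPolynomial (Fin m) k))
    (hN : ∀ i, g i = ∑ j, N i j * X j) :
    Ideal.Quotient.mk I N.det ≠ 0 := by
  obtain rfl : g = N *ᵥ X := funext hN
  rw [Ne, Ideal.Quotient.eq_zero_iff_mem, hI]
  exact fun hdet => span_range_X_ne_top
    (Ideal.span_eq_top_of_det_mem_span_mulVec N X hreg.toIsWeaklyRegular hdet)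

/-- the class of `det N` in `R/I` is nonzero, where
`(g_1,…,g_m)^T = N·(x_1,…,x_m)^T`. -/
theorem det_class_ne_zero {k : Type*} [Field k] {m : ℕ}
    (g : Fin m → MvPolynomial (Fin m) k) (d : Fin m → ℕ)
    (hhom : ∀ i, (g i).IsHomogeneous (d i)) (hd : ∀ i, 0 < d i)
    (hreg : RingTheory.Sequence.IsRegular (MvPolynomial (Fin m) k) (List.ofFn g))
    (I : Ideal (MvPolynomial (Fin m) k)) (hI : I = Ideal.span (Set.range g))
    (hart : IsArtinianRing (MvPolynomial (Fin m) k ⧸ I))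
    (N : Matrix (Fin m) (Fin m) (MvPolynomial (Fin m) k))
    (hN : ∀ i, g i = ∑ j, N i j * X j) :
    Ideal.Quotient.mk I N.det ≠ 0 :=
  det_class_ne_zero_general g hreg I hI N hN
end

section
/- Let k be a field of characteristic p > 0, R = k[x_1,...,x_m], g_1,...,g_m a homogeneous regular sequence in R_+ generating an Artinian ideal, and N an m×m matrix over R with (g_1,...,g_m)^T = N·(x_1,...,x_m)^T. Set z_0 = det N. Then g_1^{p-1}···g_m^{p-1}·z_0 − x_1^{p-1}···x_m^{p-1}·z_0^p lies in the ideal (g_1^p,...,g_m^p). -/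
/-!
Put `B = diag(gᵢ^(p-1)) · N` and `C = N^[p] · diag(xⱼ^(p-1))`, whose determinants are the two terms.
Both send `x` to `(gᵢ^p)ᵢ`, for `C` by the Frobenius, so every row of `B - C` is a syzygy of the
variables, hence a Koszul syzygy. Modulo `(gᵢ^p)` both `B` and `C` annihilate `x`, and for a matrix
annihilating `x` the cofactors along any row are proportional to `x`, so changing that row by a
Koszul syzygy does not change the determinant. Trading the rows of `B` for those of `C` one at a
time gives `det B ≡ det C`.
-/

open MvPolynomial Matrix

section Koszul

variable {Q : Type*} [CommRing Q] {n : Type*} [DecidableEq n]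

def koszulSyzygies (x : n → Q) : Submodule Q (n → Q) :=
  Submodule.span Q (Set.range fun jk : n × n => Pi.single jk.1 (x jk.2) - Pi.single jk.2 (x jk.1))

theorem comp_mem_koszulSyzygies {S : Type*} [CommRing S] (φ : Q →+* S) {x v : n → Q}
    (hv : v ∈ koszulSyzygies x) : φ ∘ v ∈ koszulSyzygies (φ ∘ x) := by
  induction hv using Submodule.span_induction with
  | mem v hv =>
    obtain ⟨⟨j, k⟩, rfl⟩ := hv
    refine Submodule.subset_span ⟨(j, k), ?_⟩
    ext i
    simp [Pi.single_apply, apply_ite φ]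
  | zero => simp
  | add v w _ _ hv hw => convert add_mem hv hw using 1; ext; simp
  | smul c v _ hv => convert Submodule.smul_mem _ (φ c) hv using 1; ext; simp

variable [Fintype n]

theorem dotProduct_eq_zero_of_mem_koszulSyzygies {x v : n → Q} (hv : v ∈ koszulSyzygies x) :
    v ⬝ᵥ x = 0 := by
  induction hv using Submodule.span_induction with
  | mem v hv =>
    obtain ⟨⟨j, k⟩, rfl⟩ := hv
    simp [sub_dotProduct, single_dotProduct, mul_comm]
  | zero => simp
  | add v w _ _ hv hw => simp [add_dotProduct, hv, hw]
  | smul c v _ hv => simp [smul_dotProduct, hv]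

theorem det_updateRow_eq_vecMul_adjugate (A : Matrix n n Q) (r : n) (w : n → Q) :
    (A.updateRow r w).det = (w ᵥ* A.adjugate) r := by
  rw [← det_transpose, ← updateCol_transpose, ← cramer_apply, cramer_eq_adjugate_mulVec,
    ← adjugate_transpose, mulVec_transpose]

theorem adjugate_updateRow_apply (A : Matrix n n Q) (r : n) (v : n → Q) (i : n) :
    (A.updateRow r v).adjugate i r = A.adjugate i r := by
  rw [adjugate_apply, adjugate_apply, updateRow_idem]

theorem mul_adjugate_apply_comm {A : Matrix n n Q} {x : n → Q} (hA : A *ᵥ x = 0) (r j k : n) :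
    x k * A.adjugate j r = x j * A.adjugate k r := by
  set U := A.updateRow r (Pi.single j 1)
  have hU : U *ᵥ x = Pi.single r (x j) := by
    ext i
    rcases eq_or_ne i r with rfl | hi
    · simp [U, mulVec, single_dotProduct]
    · simpa [U, mulVec, hi] using congrFun hA i
  have := congrFun (congrArg (U.adjugate *ᵥ ·) hU) k
  simp only [mulVec_mulVec, adjugate_mul, smul_mulVec, one_mulVec, mulVec_single] at this
  simpa [U, adjugate_updateRow_apply, ← adjugate_apply, mul_comm] using this

theorem vecMul_adjugate_apply_eq_zero_of_mem_koszulSyzygies {A : Matrix n n Q} {x : n → Q}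
    (hA : A *ᵥ x = 0) (r : n) {w : n → Q} (hw : w ∈ koszulSyzygies x) :
    (w ᵥ* A.adjugate) r = 0 := by
  induction hw using Submodule.span_induction with
  | mem v hv =>
    obtain ⟨⟨j, k⟩, rfl⟩ := hv
    simp [sub_vecMul, mul_adjugate_apply_comm hA r j k]
  | zero => simp
  | add v w _ _ hv hw => simp [add_vecMul, hv, hw]
  | smul c v _ hv => simp [smul_vecMul, hv]

theorem det_updateRow_eq_of_sub_mem_koszulSyzygies {A : Matrix n n Q} {x : n → Q}
    (hA : A *ᵥ x = 0) (r : n) {u v : n → Q} (huv : u - v ∈ koszulSyzygies x) :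
    (A.updateRow r u).det = (A.updateRow r v).det := by
  rw [det_updateRow_eq_vecMul_adjugate, det_updateRow_eq_vecMul_adjugate, ← sub_eq_zero,
    ← Pi.sub_apply, ← sub_vecMul]
  exact vecMul_adjugate_apply_eq_zero_of_mem_koszulSyzygies hA r huv

theorem det_eq_det_of_sub_mem_koszulSyzygies {B C : Matrix n n Q} {x : n → Q}
    (hB : B *ᵥ x = 0) (hC : C *ᵥ x = 0) (hBC : ∀ i, B i - C i ∈ koszulSyzygies x) :
    B.det = C.det := by
  let mix (s : Finset n) : Matrix n n Q := of fun i j => if i ∈ s then C i j else B i j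
  have hmix (s : Finset n) : mix s *ᵥ x = 0 := by
    ext i
    by_cases hi : i ∈ s
    · simpa [mix, mulVec, hi] using congrFun hC i
    · simpa [mix, mulVec, hi] using congrFun hB i
  have hdet (s : Finset n) : (mix s).det = B.det := by
    induction s using Finset.induction_on with
    | empty => simp [mix]; rfl
    | insert a s ha ih =>
      have hB' : mix s = (mix s).updateRow a (B a) := by
        ext i j; by_cases hi : i = a <;> simp [mix, updateRow_apply, hi, ha]
      have hC' : mix (insert a s) = (mix s).updateRow a (C a) := by
        ext i j; by_cases hi : i = a <;> simp [mix, updateRow_apply, hi]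
      rw [hC', ← det_updateRow_eq_of_sub_mem_koszulSyzygies (hmix s) a (hBC a), ← hB', ih]
  rw [← hdet Finset.univ]
  simp [mix]; rfl

theorem det_sub_det_mem_of_mulVec_mem {I : Ideal Q} {B C : Matrix n n Q} {x : n → Q}
    (hB : ∀ i, (B *ᵥ x) i ∈ I) (hC : ∀ i, (C *ᵥ x) i ∈ I)
    (hBC : ∀ i, B i - C i ∈ koszulSyzygies x) :
    B.det - C.det ∈ I := by
  let π := Ideal.Quotient.mk I
  have hπ {M : Matrix n n Q} (hM : ∀ i, (M *ᵥ x) i ∈ I) : π.mapMatrix M *ᵥ (π ∘ x) = 0 := by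
    ext i
    rw [RingHom.mapMatrix_apply, ← RingHom.map_mulVec]
    exact Ideal.Quotient.eq_zero_iff_mem.mpr (hM i)
  rw [← Ideal.Quotient.eq, RingHom.map_det, RingHom.map_det]
  refine det_eq_det_of_sub_mem_koszulSyzygies (hπ hB) (hπ hC) fun i => ?_
  convert comp_mem_koszulSyzygies π (hBC i) using 1
  ext; simp [π]

end Koszul

section Polynomial

variable {R σ : Type*} [CommRing R] [DecidableEq σ]

theorem X_dvd_sub_aeval_update_X_zero (a : σ) (P : MvPolynomial σ R) :
    X a ∣ P - aeval (Function.update X a 0) P := by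
  rw [← Ideal.mem_span_singleton, ← Ideal.Quotient.eq]
  suffices (Ideal.Quotient.mkₐ R (Ideal.span {X a})).comp (AlgHom.id R _) =
      (Ideal.Quotient.mkₐ R _).comp (aeval (Function.update X a 0)) from
    congr($this P)
  ext i
  rcases eq_or_ne i a with rfl | hi
  · simp
  · simp [hi]

theorem mem_koszulSyzygies_X_of_dotProduct_eq_zero [Fintype σ] {f : σ → MvPolynomial σ R}
    (hf : f ⬝ᵥ X = 0) : f ∈ koszulSyzygies X := by
  suffices ∀ s : Finset σ, ∀ f : σ → MvPolynomial σ R, (∀ j ∉ s, f j = 0) → f ⬝ᵥ X = 0 →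
      f ∈ koszulSyzygies X from this Finset.univ f (by simp) hf
  intro s
  induction s using Finset.induction_on with
  | empty =>
    intro f hf _
    rw [show f = 0 from funext fun j => hf j (Finset.notMem_empty j)]
    exact zero_mem _
  | insert a s ha ih =>
    intro f hsupp hf
    -- Write `f j = φ (f j) + X a * q j`, with `φ` setting `X a = 0`. Subtracting the Koszul
    -- syzygies `q j • (X a eⱼ - X j eₐ)` leaves `φ (f j)` off `a`, and the `a`-coordinate of the
    -- remainder is then killed by `X a`, so vanishes.
    set φ : MvPolynomial σ R →ₐ[R] MvPolynomial σ R := aeval (Function.update X a 0)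
    choose q hq using fun j => X_dvd_sub_aeval_update_X_zero a (f j)
    set v : σ → MvPolynomial σ R := ∑ j, q j • (Pi.single j (X a) - Pi.single a (X j))
    set g := f - v
    have hsum : v ∈ koszulSyzygies X :=
      Submodule.sum_mem _ fun j _ => Submodule.smul_mem _ _ (Submodule.subset_span ⟨(j, a), rfl⟩)
    have hg_ne (j) (hj : j ≠ a) : g j = φ (f j) := by
      simp only [g, v, Pi.sub_apply, Finset.sum_apply, Pi.smul_apply,
        Pi.single_apply, hj, if_false, sub_zero, smul_eq_mul, mul_ite, mul_zero,
        Finset.sum_ite_eq, Finset.mem_univ, if_true]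
      linear_combination hq j
    have hgX : g ⬝ᵥ X = 0 := by
      rw [sub_dotProduct, hf, dotProduct_eq_zero_of_mem_koszulSyzygies hsum, sub_zero]
    have hga : g a = 0 := by
      have key : g ⬝ᵥ X - φ (f ⬝ᵥ X) = g a * X a := by
        rw [dotProduct, dotProduct, map_sum, ← Finset.sum_sub_distrib]
        refine (Finset.sum_eq_single a (fun j _ hj => ?_) (by simp)).trans ?_
        · simp [φ, hg_ne j hj, hj]
        · simp [φ]
      rw [hgX, hf, map_zero, sub_zero] at key
      exact X_mul_cancel_right_iff.mp (by rw [← key, zero_mul])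
    have hg_supp (j) (hj : j ∉ s) : g j = 0 := by
      rcases eq_or_ne j a with rfl | hja
      · exact hga
      · rw [hg_ne j hja, hsupp j (by simp [hj, hja]), map_zero]
    simpa [g] using add_mem (ih g hg_supp hgX) hsum

end Polynomial

theorem prod_pow_mul_det_sub_prod_pow_mul_det_pow_mem {Q n : Type*} [CommRing Q] [Fintype n]
    [DecidableEq n] (p : ℕ) [ExpChar Q p] (N : Matrix n n Q) (x : n → Q) (I : Ideal Q)
    (hI : ∀ i, (N *ᵥ x) i ^ p ∈ I)
    (hx : ∀ v, v ⬝ᵥ x = 0 → v ∈ koszulSyzygies x) :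
    (∏ i, (N *ᵥ x) i ^ (p - 1)) * N.det - (∏ i, x i ^ (p - 1)) * N.det ^ p ∈ I := by
  have hp : p - 1 + 1 = p := Nat.sub_add_cancel (expChar_pos Q p)
  let B := diagonal (fun i => (N *ᵥ x) i ^ (p - 1)) * N
  let C := N.map (· ^ p) * diagonal (fun j => x j ^ (p - 1))
  have hBx : B *ᵥ x = fun i => (N *ᵥ x) i ^ p := by
    ext i
    simp [B, ← mulVec_mulVec, mulVec_diagonal, ← pow_succ, hp]
  have hCx : C *ᵥ x = fun i => (N *ᵥ x) i ^ p := by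
    have hxp : diagonal (fun j => x j ^ (p - 1)) *ᵥ x = fun j => x j ^ p := by
      ext j; rw [mulVec_diagonal, ← pow_succ, hp]
    simp only [C, ← mulVec_mulVec, hxp]
    ext i
    simp [mulVec, dotProduct, mul_pow, sum_pow_char]
  have hdetC : C.det = N.det ^ p * ∏ i, x i ^ (p - 1) := by
    rw [det_mul, det_diagonal, ← frobenius_def, RingHom.map_det]
    rfl
  rw [← det_diagonal, ← det_mul, mul_comm, ← hdetC]
  refine det_sub_det_mem_of_mulVec_mem (B := B) (C := C) (x := x) (fun i => hBx ▸ hI i)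
    (fun i => hCx ▸ hI i) fun i => hx _ ?_
  rw [sub_dotProduct, ← mulVec, ← mulVec, hBx, hCx, sub_self]

theorem key_ideal_membership_general {k : Type*} [Field k] {p : ℕ} [CharP k p]
    (hp : 0 < p) {m : ℕ}
    (g : Fin m → MvPolynomial (Fin m) k)
    (N : Matrix (Fin m) (Fin m) (MvPolynomial (Fin m) k))
    (hN : ∀ i, g i = ∑ j, N i j * X j) :
    (∏ i, g i ^ (p - 1)) * N.det - (∏ i, (X i : MvPolynomial (Fin m) k) ^ (p - 1)) * N.det ^ p
      ∈ Ideal.span (Set.range fun i => g i ^ p) := by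
  have : NeZero p := ⟨hp.ne'⟩
  have : Fact p.Prime := ⟨(CharP.char_is_prime_of_pos k p).1⟩
  obtain rfl : g = N *ᵥ X := funext hN
  exact prod_pow_mul_det_sub_prod_pow_mul_det_pow_mem p N X _
    (fun i => Ideal.subset_span ⟨i, rfl⟩) fun v hv => mem_koszulSyzygies_X_of_dotProduct_eq_zero hv

/-- in characteristic `p > 0`, with `z_0 = det N` where
`(g_1,…,g_m)^T = N·(x_1,…,x_m)^T`,
`g_1^{p-1}⋯g_m^{p-1}·z_0 − x_1^{p-1}⋯x_m^{p-1}·z_0^p ∈ (g_1^p,…,g_m^p)`. -/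
theorem key_ideal_membership {k : Type*} [Field k] {p : ℕ} [CharP k p]
    (hp : 0 < p) {m : ℕ}
    (g : Fin m → MvPolynomial (Fin m) k) (d : Fin m → ℕ)
    (hhom : ∀ i, (g i).IsHomogeneous (d i)) (hd : ∀ i, 0 < d i)
    (hreg : RingTheory.Sequence.IsRegular (MvPolynomial (Fin m) k) (List.ofFn g))
    (hart : IsArtinianRing (MvPolynomial (Fin m) k ⧸ Ideal.span (Set.range g)))
    (N : Matrix (Fin m) (Fin m) (MvPolynomial (Fin m) k))
    (hN : ∀ i, g i = ∑ j, N i j * X j) :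
    (∏ i, g i ^ (p - 1)) * N.det - (∏ i, (X i : MvPolynomial (Fin m) k) ^ (p - 1)) * N.det ^ p
      ∈ Ideal.span (Set.range fun i => g i ^ p) :=
  key_ideal_membership_general hp g N hN
end

section
/- Let k be a field of characteristic p > 0 and R = k[x_1,...,x_m]. If g is homogeneous of degree d, s ≥ d, and φ : R_s → k is a k-linear map vanishing on the degree-s part of the ideal (g), then for every homogeneous v ∈ R of degree m(p−1) + sp − dp, the sum over all degree-s monic monomials u of ((x_1^{p−1}···x_m^{p−1}·u^p) ∘ (g^p·v)) · φ(u)^p equals 0. -/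
/-!
Write `e = (p-1,…,p-1)` and `g = ∑_b g_b x^b`, so that `g^p = ∑_b g_b^p x^{pb}`. Since every
`e_i < p`, the coefficient of `x^{e+pa}` in `g^p v` is `∑_{b ≤ a} g_b^p v_{e+p(a-b)}`. Writing
`a = b + c`, the sum becomes `∑_c v_{e+pc} ∑_b (g_b φ(x^{b+c}))^p = ∑_c v_{e+pc} φ(g x^c)^p`
over monomials `x^c` of degree `s - d`, and each `φ(g x^c)` vanishes by hypothesis.
-/

open MvPolynomial

/-- The symmetric bilinear form on each graded piece of `k[x_1,…,x_m]` making the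
monic monomials an orthonormal basis (extended to all polynomials). -/
noncomputable def contract {k : Type*} [CommSemiring k] {m : ℕ}
    (u w : MvPolynomial (Fin m) k) : k :=
  ∑ d ∈ u.support, u.coeff d * w.coeff d

open Finset

theorem Finset.Nat.sum_antidiagonalTuple_eq_sum_finsuppAntidiag {M : Type*} [AddCommMonoid M]
    (m n : ℕ) (f : (Fin m →₀ ℕ) → M) :
    ∑ r ∈ antidiagonalTuple m n, f (Finsupp.equivFunOnFinite.symm r) =
      ∑ a ∈ univ.finsuppAntidiag n, f a :=
  sum_equiv Finsupp.equivFunOnFinite.symm (by simp [Finset.Nat.mem_antidiagonalTuple]) (by simp)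

theorem Finset.mem_finsuppAntidiag_univ {ι : Type*} [Fintype ι] [DecidableEq ι] {a : ι →₀ ℕ}
    {n : ℕ} : a ∈ univ.finsuppAntidiag n ↔ a.degree = n := by
  simp [Finsupp.degree_eq_sum]

theorem Finset.sum_finsuppAntidiag_univ_filter_le {ι M : Type*} [Fintype ι] [DecidableEq ι]
    [AddCommMonoid M] {b : ι →₀ ℕ} {n : ℕ} (hb : b.degree ≤ n) (f : (ι →₀ ℕ) → M) :
    ∑ a ∈ univ.finsuppAntidiag n with b ≤ a, f a =
      ∑ c ∈ univ.finsuppAntidiag (n - b.degree), f (b + c) := by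
  refine sum_nbij' (fun a ↦ a - b) (fun c ↦ b + c) ?_ ?_ ?_ ?_ ?_
  · intro a ha
    rw [mem_filter, mem_finsuppAntidiag_univ] at ha
    rw [mem_finsuppAntidiag_univ]
    have := map_add Finsupp.degree b (a - b)
    rw [add_tsub_cancel_of_le ha.2] at this
    omega
  · intro c hc
    rw [mem_finsuppAntidiag_univ] at hc
    rw [mem_filter, mem_finsuppAntidiag_univ, map_add]
    exact ⟨by omega, le_self_add⟩
  · intro a ha
    exact add_tsub_cancel_of_le (mem_filter.1 ha).2
  · intro c _
    exact add_tsub_cancel_left b c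
  · intro a ha
    rw [add_tsub_cancel_of_le (mem_filter.1 ha).2]

namespace Finsupp

variable {ι : Type*} {p : ℕ} {e a b : ι →₀ ℕ}

theorem nsmul_le_add_nsmul_iff (he : ∀ i, e i < p) : p • b ≤ e + p • a ↔ b ≤ a := by
  simp only [le_def, coe_add, coe_smul, Pi.add_apply, Pi.smul_apply, smul_eq_mul]
  refine forall_congr' fun i ↦ ⟨fun h ↦ ?_, fun h ↦ ?_⟩
  · by_contra! hlt
    nlinarith [he i]
  · nlinarith [he i]

theorem add_nsmul_tsub_nsmul (hba : b ≤ a) : e + p • a - p • b = e + p • (a - b) := by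
  ext i
  have := hba i
  simp only [coe_tsub, coe_add, coe_smul, Pi.sub_apply, Pi.add_apply, Pi.smul_apply,
    smul_eq_mul, Nat.mul_sub]
  have := Nat.mul_le_mul_left p this
  omega

end Finsupp

namespace MvPolynomial

theorem contract_monomial_one_left {k : Type*} [CommSemiring k] [Nontrivial k] {m : ℕ}
    (a : Fin m →₀ ℕ) (w : MvPolynomial (Fin m) k) :
    contract (monomial a (1 : k)) w = w.coeff a := by
  classical
  simp [contract, support_monomial]

theorem prod_X_pow_eq_monomial_const {σ R : Type*} [Fintype σ] [CommSemiring R] (n : ℕ) :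
    ∏ i, (X i : MvPolynomial σ R) ^ n = monomial (Finsupp.equivFunOnFinite.symm fun _ ↦ n) 1 := by
  rw [monomial_eq, C_1, one_mul, Finsupp.prod_fintype _ _ (fun _ ↦ pow_zero _)]
  rfl

variable {σ R : Type*} [CommSemiring R] {p : ℕ} [ExpChar R p]

theorem pow_expChar_eq_sum_monomial (h : MvPolynomial σ R) :
    h ^ p = ∑ b ∈ h.support, monomial (p • b) (h.coeff b ^ p) := by
  conv_lhs => rw [h.as_sum]
  simp only [sum_pow_char, monomial_pow]

theorem coeff_add_nsmul_pow_expChar_mul [DecidableEq σ] {e a : σ →₀ ℕ} (he : ∀ i, e i < p)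
    (h v : MvPolynomial σ R) :
    coeff (e + p • a) (h ^ p * v) =
      ∑ b ∈ h.support with b ≤ a, h.coeff b ^ p * v.coeff (e + p • (a - b)) := by
  rw [pow_expChar_eq_sum_monomial, sum_mul, coeff_sum, sum_filter]
  refine sum_congr rfl fun b _ ↦ ?_
  rw [coeff_monomial_mul']
  by_cases hba : b ≤ a
  · rw [if_pos ((Finsupp.nsmul_le_add_nsmul_iff he).2 hba), if_pos hba,
      Finsupp.add_nsmul_tsub_nsmul hba]
  · rw [if_neg (mt (Finsupp.nsmul_le_add_nsmul_iff he).1 hba), if_neg hba]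

theorem map_mul_monomial_pow_expChar (φ : MvPolynomial σ R →ₗ[R] R)
    (h : MvPolynomial σ R) (c : σ →₀ ℕ) :
    φ (h * monomial c 1) ^ p = ∑ b ∈ h.support, h.coeff b ^ p * φ (monomial (b + c) 1) ^ p := by
  conv_lhs => rw [h.as_sum]
  simp only [sum_mul, monomial_mul, mul_one, map_sum, sum_pow_char]
  refine sum_congr rfl fun b _ ↦ ?_
  rw [← mul_pow, ← smul_eq_mul, ← map_smul, smul_monomial, smul_eq_mul, mul_one]

theorem sum_finsuppAntidiag_coeff_add_nsmul_pow_expChar_mul [Fintype σ] [DecidableEq σ]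
    {e : σ →₀ ℕ} (he : ∀ i, e i < p) {h : MvPolynomial σ R} {d s : ℕ} (hh : h.IsHomogeneous d)
    (hds : d ≤ s) (v : MvPolynomial σ R) (φ : MvPolynomial σ R →ₗ[R] R) :
    ∑ a ∈ univ.finsuppAntidiag s, coeff (e + p • a) (h ^ p * v) * φ (monomial a 1) ^ p =
      ∑ c ∈ univ.finsuppAntidiag (s - d), v.coeff (e + p • c) * φ (h * monomial c 1) ^ p := by
  calc _ = ∑ b ∈ h.support, ∑ a ∈ univ.finsuppAntidiag s with b ≤ a,
        h.coeff b ^ p * v.coeff (e + p • (a - b)) * φ (monomial a 1) ^ p := by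
        simp_rw [coeff_add_nsmul_pow_expChar_mul he, sum_mul, sum_filter]
        exact sum_comm
    _ = ∑ b ∈ h.support, ∑ c ∈ univ.finsuppAntidiag (s - d),
        h.coeff b ^ p * v.coeff (e + p • c) * φ (monomial (b + c) 1) ^ p := by
        refine sum_congr rfl fun b hmem ↦ ?_
        have hb : b.degree = d := by
          rw [Finsupp.degree_eq_weight_one]
          exact hh (mem_support_iff.mp hmem)
        rw [sum_finsuppAntidiag_univ_filter_le (hb ▸ hds), hb]
        simp_rw [add_tsub_cancel_left]
    _ = _ := by
        rw [sum_comm]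
        refine sum_congr rfl fun c _ ↦ ?_
        rw [map_mul_monomial_pow_expChar, mul_sum]
        exact sum_congr rfl fun b _ ↦ by ring

end MvPolynomial

theorem vanish_lemma_general {k : Type*} [Field k] {p : ℕ} [CharP k p] (hp : 0 < p)
    {m : ℕ} (g : MvPolynomial (Fin m) k) {d s : ℕ}
    (hg : g.IsHomogeneous d) (hds : d ≤ s)
    (φ : MvPolynomial (Fin m) k →ₗ[k] k)
    (hφ : ∀ w : MvPolynomial (Fin m) k,
      w.IsHomogeneous s → w ∈ Ideal.span {g} → φ w = 0)
    (v : MvPolynomial (Fin m) k) :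
    ∑ r ∈ Finset.Nat.antidiagonalTuple m s,
      contract ((∏ i, (X i : MvPolynomial (Fin m) k) ^ (p - 1)) *
          (monomial (Finsupp.equivFunOnFinite.symm r) (1 : k)) ^ p)
        (g ^ p * v) *
        (φ (monomial (Finsupp.equivFunOnFinite.symm r) (1 : k))) ^ p = 0 := by
  classical
  have : NeZero p := ⟨hp.ne'⟩
  have := CharP.char_is_prime_of_pos k p
  have : ExpChar k p := .prime Fact.out
  rw [prod_X_pow_eq_monomial_const, Nat.sum_antidiagonalTuple_eq_sum_finsuppAntidiag m s
    fun a ↦ contract (monomial _ 1 * monomial a 1 ^ p) (g ^ p * v) * φ (monomial a 1) ^ p]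
  simp_rw [monomial_pow, one_pow, monomial_mul, one_mul, contract_monomial_one_left]
  rw [sum_finsuppAntidiag_coeff_add_nsmul_pow_expChar_mul (fun _ ↦ Nat.sub_lt hp one_pos) hg hds]
  refine sum_eq_zero fun c hc ↦ ?_
  have hgc : (g * monomial c 1).IsHomogeneous s := by
    simpa [Nat.add_sub_cancel' hds] using
      hg.mul (isHomogeneous_monomial 1 (mem_finsuppAntidiag_univ.mp hc))
  rw [hφ _ hgc (Ideal.mul_mem_right _ _ (Ideal.mem_span_singleton_self g)), zero_pow hp.ne',
    mul_zero]

/-- if `φ` is a linear functional vanishing on the degree-`s` part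
of `(g)` (with `g` homogeneous of degree `d ≤ s`), then for every homogeneous
`v` of degree `m(p−1) + sp − dp`,
`∑_{u ∈ M_s} ((x_1^{p−1}⋯x_m^{p−1}·u^p) ∘ (g^p·v))·φ(u)^p = 0`. -/
theorem vanish_lemma {k : Type*} [Field k] {p : ℕ} [CharP k p] (hp : 0 < p)
    {m : ℕ} (g : MvPolynomial (Fin m) k) {d s : ℕ}
    (hg : g.IsHomogeneous d) (hds : d ≤ s)
    (φ : MvPolynomial (Fin m) k →ₗ[k] k)
    (hφ : ∀ w : MvPolynomial (Fin m) k,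
      w.IsHomogeneous s → w ∈ Ideal.span {g} → φ w = 0)
    (v : MvPolynomial (Fin m) k)
    (hv : v.IsHomogeneous (m * (p - 1) + (s - d) * p)) :
    ∑ r ∈ Finset.Nat.antidiagonalTuple m s,
      contract ((∏ i, (X i : MvPolynomial (Fin m) k) ^ (p - 1)) *
          (monomial (Finsupp.equivFunOnFinite.symm r) (1 : k)) ^ p)
        (g ^ p * v) *
        (φ (monomial (Finsupp.equivFunOnFinite.symm r) (1 : k))) ^ p = 0 :=
  vanish_lemma_general hp g hg hds φ hφ v
end
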